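/- Let d, m ≥ 1 be integers, let Λ be a set, and let a : ({1,…,d} → Λ) → ℂ be a finitely supported family of complex numbers. Let π be an ε_d-partition of [2dm]. For a function I : [2dm] → Λ, write I = (i₁,…,i_{2m}) where i_j : {1,…,d} → Λ is given by i_j(l) = I((j−1)d + l). Then Σ_{I : [2dm] → Λ, ker I ≥ π} |a(i₁)|·|a(i₂)|···|a(i_{2m})| ≤ (Σ_{i : {1,…,d} → Λ} |a(i)|²)^m (the left-hand sum has only finitely many nonzero terms since a is finitely supported). -/

import Mathlib

/-!
Pairing consecutive elements of each block of `π` gives an involution `σ` of `[2dm]` that swaps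
positions where `ε_d = 1` with positions where `ε_d = ∗`, and every `I` with `ker I ≥ π` is
`σ`-invariant. A `σ`-invariant `I` is freely determined by its values on either colour class, that
is by the odd segments `i₁, i₃, …` or by the even segments `i₂, i₄, …`. Writing
`|a(i₁)|⋯|a(i_{2m})| = P Q` with `P`, `Q` the products over odd and even segments and bounding
`P Q ≤ (P² + Q²) / 2`, each of the two resulting sums is `Σ ∏ₖ |a(jₖ)|² = (Σᵢ |a(i)|²)^m`.
-/

open Finset

/-- Two elements lie in the same block of the partition `P`. -/
def SameBlock {N : ℕ} (P : Finpartition (univ : Finset (Fin N))) (s t : Fin N) : Prop :=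
  ∃ B ∈ P.parts, s ∈ B ∧ t ∈ B

/-- A partition of `[N]` is non-crossing if there are no `s₁ < t₁ < s₂ < t₂` with
`s₁ ∼ s₂`, `t₁ ∼ t₂` but `s₁ ≁ t₁`. -/
def NonCrossing {N : ℕ} (P : Finpartition (univ : Finset (Fin N))) : Prop :=
  ∀ s₁ t₁ s₂ t₂ : Fin N, s₁ < t₁ → t₁ < s₂ → s₂ < t₂ →
    SameBlock P s₁ s₂ → SameBlock P t₁ t₂ → SameBlock P s₁ t₁

/-- Every block has even cardinality. -/
def EvenPartition {N : ℕ} (P : Finpartition (univ : Finset (Fin N))) : Prop :=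
  ∀ B ∈ P.parts, Even B.card

/-- The (two-valued) function `ε` alternates along each block of `P`, listed in
increasing order. -/
def Alternating {N : ℕ} (ε : Fin N → Bool) (P : Finpartition (univ : Finset (Fin N))) : Prop :=
  ∀ B ∈ P.parts, (Finset.sort B (· ≤ ·)).Chain' (fun a b => ε a ≠ ε b)

/-- An `ε`-partition: an even partition on each block of which `ε` alternates. -/
def EpsPartition {N : ℕ} (ε : Fin N → Bool) (P : Finpartition (univ : Finset (Fin N))) : Prop :=
  EvenPartition P ∧ Alternating ε P

/-- A pairing: every block has exactly two elements. -/
def IsPairing {N : ℕ} (P : Finpartition (univ : Finset (Fin N))) : Prop :=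
  ∀ B ∈ P.parts, B.card = 2

/-- `σ` refines `π`: every block of `σ` is contained in a block of `π` (i.e. `σ ≤ π`). -/
def Refines {N : ℕ} (σ π : Finpartition (univ : Finset (Fin N))) : Prop :=
  ∀ B ∈ σ.parts, ∃ C ∈ π.parts, B ⊆ C

/-- The pattern `ε_d = (1^d ∗^d)^m` on `[2dm]` (0-based; `true` codes `1`, `false` codes `∗`). -/
def epsd (d m : ℕ) : Fin (2*d*m) → Bool := fun j => decide ((j : ℕ) / d % 2 = 0)

/-- `ker I ≥ π` : the function `I` is constant on every block of `π`. -/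
def KerGe {N : ℕ} {Λ : Type*} (π : Finpartition (univ : Finset (Fin N))) (I : Fin N → Λ) : Prop :=
  ∀ B ∈ π.parts, ∀ s ∈ B, ∀ t ∈ B, I s = I t

/-- The position `(j-1)d + l` in `[2dm]`, splitting `[2dm]` into `2m` consecutive
segments of length `d`. -/
def seg (d m : ℕ) (j : Fin (2*m)) (l : Fin d) : Fin (2*d*m) :=
  ⟨j.1 * d + l.1, by
    have hj : j.1 + 1 ≤ 2*m := j.2
    have hl : l.1 < d := l.2
    calc j.1 * d + l.1 < j.1 * d + d := by linarith
      _ = (j.1 + 1) * d := by ring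
      _ ≤ (2*m) * d := by gcongr
      _ = 2*d*m := by ring⟩

def partnerIdx (k : ℕ) : ℕ := if k % 2 = 0 then k + 1 else k - 1

lemma partnerIdx_partnerIdx (k : ℕ) : partnerIdx (partnerIdx k) = k := by
  unfold partnerIdx; split_ifs <;> omega

lemma partnerIdx_lt {k n : ℕ} (hk : k < n) (hn : Even n) : partnerIdx k < n := by
  obtain ⟨c, rfl⟩ := hn
  unfold partnerIdx; split_ifs <;> omega

lemma partnerIdx_eq_succ_or_succ_eq (k : ℕ) : partnerIdx k = k + 1 ∨ partnerIdx k + 1 = k := by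
  unfold partnerIdx; split_ifs <;> omega

namespace List

variable {α : Type*} [DecidableEq α] {L : List α} {x : α}

/-- The neighbour of `x` when `L` is cut into consecutive pairs (`x` itself if `x ∉ L`). -/
def pairPartner (L : List α) (x : α) : α := L.getD (partnerIdx (L.idxOf x)) x

lemma pairPartner_eq_getElem (hL : Even L.length) (hx : x ∈ L) :
    L.pairPartner x = L[partnerIdx (L.idxOf x)]'(partnerIdx_lt (idxOf_lt_length_iff.2 hx) hL) :=
  getD_eq_getElem _ _ _

lemma pairPartner_mem (hL : Even L.length) (hx : x ∈ L) : L.pairPartner x ∈ L := by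
  rw [pairPartner_eq_getElem hL hx]
  exact getElem_mem _

lemma pairPartner_pairPartner (hnd : L.Nodup) (hL : Even L.length) (hx : x ∈ L) :
    L.pairPartner (L.pairPartner x) = x := by
  rw [pairPartner_eq_getElem hL (pairPartner_mem hL hx)]
  simp only [pairPartner_eq_getElem hL hx, hnd.idxOf_getElem, partnerIdx_partnerIdx]
  exact getElem_idxOf _

lemma IsChain.rel_pairPartner {R : α → α → Prop} (hR : L.IsChain R) (hL : Even L.length)
    (hx : x ∈ L) : R x (L.pairPartner x) ∨ R (L.pairPartner x) x := by
  have hk := idxOf_lt_length_iff.2 hx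
  have hp := partnerIdx_lt hk hL
  rw [isChain_iff_getElem] at hR
  rw [pairPartner_eq_getElem hL hx]
  rcases partnerIdx_eq_succ_or_succ_eq (L.idxOf x) with h | h
  · left
    have := hR _ (h ▸ hp)
    simp only [← h, getElem_idxOf] at this
    exact this
  · right
    have := hR _ (h ▸ hk)
    simp only [h, getElem_idxOf] at this
    exact this

end List

/-- Pair consecutive elements of each block, listed in increasing order. -/
theorem EpsPartition.exists_involutive_flip {N : ℕ} {ε : Fin N → Bool}
    {π : Finpartition (univ : Finset (Fin N))} (hπ : EpsPartition ε π) :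
    ∃ σ : Fin N → Fin N, Function.Involutive σ ∧ (∀ p, ε (σ p) = !ε p) ∧
      ∀ p, σ p ∈ π.part p := by
  have hpart (p : Fin N) : π.part p ∈ π.parts := π.part_mem.2 (mem_univ p)
  have hmem (p : Fin N) : p ∈ sort (π.part p) (· ≤ ·) := (mem_sort _).2 (π.mem_part (mem_univ p))
  have hlen (p : Fin N) : Even (sort (π.part p) (· ≤ ·)).length := by
    rw [length_sort]; exact hπ.1 _ (hpart p)
  have hσ (p : Fin N) : (sort (π.part p) (· ≤ ·)).pairPartner p ∈ π.part p :=
    (mem_sort _).1 (List.pairPartner_mem (hlen p) (hmem p))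
  refine ⟨fun p => (sort (π.part p) (· ≤ ·)).pairPartner p, fun p => ?_, fun p => ?_, hσ⟩
  · simp only [π.part_eq_of_mem (hpart p) (hσ p)]
    exact List.pairPartner_pairPartner (sort_nodup _ _) (hlen p) (hmem p)
  · refine Bool.eq_not_of_ne ?_
    rcases (hπ.2 _ (hpart p)).rel_pairPartner (hlen p) (hmem p) with h | h
    exacts [Ne.symm h, h]

/-- `(true, k) ↦ 2k` and `(false, k) ↦ 2k + 1`. -/
def parityEquiv (m : ℕ) : Bool × Fin m ≃ Fin (2 * m) :=
  (Equiv.prodComm _ _).trans <|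
    ((Equiv.refl _).prodCongr (Equiv.boolNot.trans finTwoEquiv.symm)).trans <|
      finProdFinEquiv.trans (finCongr (mul_comm m 2))

lemma decide_parityEquiv_mod_two (m : ℕ) (x : Bool × Fin m) :
    decide ((parityEquiv m x : ℕ) % 2 = 0) = x.1 := by
  obtain ⟨b, k⟩ := x
  cases b <;> simp [parityEquiv, finProdFinEquiv, finTwoEquiv, Nat.add_mod]

lemma prod_eq_prod_even_mul_prod_odd {M : Type*} [CommMonoid M] (m : ℕ) (f : Fin (2 * m) → M) :
    ∏ j, f j = (∏ k, f (parityEquiv m (true, k))) * ∏ k, f (parityEquiv m (false, k)) := by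
  rw [← (parityEquiv m).prod_comp, Fintype.prod_prod_type, Fintype.prod_bool]

def segEquiv (d m : ℕ) : Fin (2 * m) × Fin d ≃ Fin (2 * d * m) :=
  finProdFinEquiv.trans (finCongr (by ring))

lemma segEquiv_apply (d m : ℕ) (j : Fin (2 * m)) (l : Fin d) : segEquiv d m (j, l) = seg d m j l :=
  Fin.ext <| by simp [segEquiv, finProdFinEquiv, seg]; ring

lemma epsd_seg (d m : ℕ) (j : Fin (2 * m)) (l : Fin d) :
    epsd d m (seg d m j l) = decide ((j : ℕ) % 2 = 0) := by
  have hd : 0 < d := l.pos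
  simp [epsd, seg, Nat.add_div_of_dvd_right, Nat.mul_div_cancel _ hd, Nat.div_eq_of_lt l.2]

/-- `(b, k, l)` is the `l`-th position of the `k`-th segment on which `ε_d` equals `b`. -/
def halfEquiv (d m : ℕ) : Bool × (Fin m × Fin d) ≃ Fin (2 * d * m) :=
  (Equiv.prodAssoc _ _ _).symm.trans <| ((parityEquiv m).prodCongr (Equiv.refl _)).trans <|
    segEquiv d m

lemma halfEquiv_apply (d m : ℕ) (b : Bool) (k : Fin m) (l : Fin d) :
    halfEquiv d m (b, k, l) = seg d m (parityEquiv m (b, k)) l := by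
  simp [halfEquiv, segEquiv_apply]

lemma epsd_halfEquiv (d m : ℕ) (x : Bool × (Fin m × Fin d)) : epsd d m (halfEquiv d m x) = x.1 := by
  obtain ⟨b, k, l⟩ := x
  rw [halfEquiv_apply, epsd_seg, decide_parityEquiv_mod_two]

section Finsum

variable {α : Type*}

lemma finsum_mem_le_finsum_mem_of_subset {M : Type*} [AddCommMonoid M] [PartialOrder M]
    [IsOrderedAddMonoid M] {f g : α → M} {s t : Set α} (hst : s ⊆ t) (hf : ∀ x ∈ s, 0 ≤ f x)
    (hfg : ∀ x ∈ s, f x ≤ g x) (hg : ∀ x ∈ t, 0 ≤ g x) (ht : (t ∩ Function.support g).Finite) :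
    ∑ᶠ x ∈ s, f x ≤ ∑ᶠ x ∈ t, g x := by
  have hs : (s ∩ Function.support f).Finite := ht.subset fun x ⟨hxs, hx⟩ =>
    ⟨hst hxs, fun h => hx (le_antisymm (h ▸ hfg x hxs) (hf x hxs))⟩
  rw [← Set.support_indicator] at hs ht
  rw [finsum_mem_def, finsum_mem_def]
  refine finsum_le_finsum' hs ht fun x => ?_
  by_cases hxs : x ∈ s
  · simpa [hxs, hst hxs] using hfg x hxs
  · by_cases hxt : x ∈ t <;> simp [hxs, hxt, hg]

lemma finite_support_prod_comp {R ι : Type*} [CommMonoidWithZero R] [Fintype ι] {f : α → R}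
    (hf : (Function.support f).Finite) :
    (Function.support fun p : ι → α => ∏ i, f (p i)).Finite :=
  (Set.Finite.pi fun _ => hf).subset fun _ hp i _ h => hp (prod_eq_zero (mem_univ i) h)

lemma finsum_pow {R : Type*} [CommSemiring R] {f : α → R} (hf : (Function.support f).Finite) (n : ℕ) :
    (∑ᶠ a, f a) ^ n = ∑ᶠ p : Fin n → α, ∏ i, f (p i) := by
  rw [finsum_eq_sum f hf, sum_pow', finsum_eq_finsetSum_of_support_subset]
  intro p hp
  simp only [Fintype.coe_piFinset, Set.Finite.coe_toFinset]
  exact fun i _ h => hp (prod_eq_zero (mem_univ i) h)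

end Finsum

section Involution

variable {P κ Λ : Type*} (E : Bool × κ ≃ P) {ε : P → Bool} {σ : P → P}

lemma bijOn_restrict_invariant (hE : ∀ x, ε (E x) = x.1) (hσ : Function.Involutive σ)
    (hflip : ∀ p, ε (σ p) = !ε p) (b : Bool) :
    Set.BijOn (fun (I : P → Λ) x => I (E (b, x))) {I | ∀ p, I (σ p) = I p} Set.univ := by
  have hcoord (p : P) (hp : ε p = b) : E (b, (E.symm p).2) = p := by
    rw [← hp, ← E.apply_symm_apply p, hE, E.symm_apply_apply]
  have hpartner (p : P) (hp : ε p ≠ b) : ε (σ p) = b := by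
    rw [hflip, Bool.not_eq_eq_eq_not]; exact Bool.eq_not_of_ne hp
  refine ⟨fun _ _ => Set.mem_univ _, fun I hI I' hI' h => funext fun p => ?_, fun J _ => ?_⟩
  · have hagree (q : P) (hq : ε q = b) : I q = I' q := by
      rw [← hcoord q hq]; exact congrFun h _
    by_cases hp : ε p = b
    · exact hagree p hp
    · rw [← hI p, ← hI' p]; exact hagree _ (hpartner p hp)
  · refine ⟨fun p => if ε p = b then J (E.symm p).2 else J (E.symm (σ p)).2, fun p => ?_,
      funext fun x => by simp [hE]⟩
    by_cases hp : ε p = b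
    · have : ¬ε (σ p) = b := by rw [hflip, hp]; simp
      simp [hp, this, hσ p]
    · simp [hp, hpartner p hp]

lemma finsum_mem_mul_le_finsum_sq (hE : ∀ x, ε (E x) = x.1) (hσ : Function.Involutive σ)
    (hflip : ∀ p, ε (σ p) = !ε p) (u : (κ → Λ) → ℝ) (hu₀ : ∀ J, 0 ≤ u J)
    (hu : (Function.support u).Finite) {s : Set (P → Λ)} (hs : ∀ I ∈ s, ∀ p, I (σ p) = I p) :
    ∑ᶠ I ∈ s, u (fun x => I (E (true, x))) * u (fun x => I (E (false, x))) ≤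
      ∑ᶠ J, u J ^ 2 := by
  set S := {I : P → Λ | ∀ p, I (σ p) = I p}
  have hbij := bijOn_restrict_invariant (Λ := Λ) E hE hσ hflip
  have hsum (b : Bool) : ∑ᶠ I ∈ S, u (fun x => I (E (b, x))) ^ 2 = ∑ᶠ J, u J ^ 2 := by
    rw [← finsum_mem_univ (fun J => u J ^ 2)]
    exact finsum_mem_eq_of_bijOn _ (hbij b) fun _ _ => rfl
  have hfin (b : Bool) :
      (S ∩ Function.support fun I => u (fun x => I (E (b, x))) ^ 2).Finite := by
    refine Set.Finite.of_finite_image (hu.subset ?_) ((hbij b).injOn.mono Set.inter_subset_left)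
    rintro _ ⟨I, ⟨-, hI⟩, rfl⟩ h
    exact hI (by simp [h])
  have h2 : 2 * ∑ᶠ I ∈ s, u (fun x => I (E (true, x))) * u (fun x => I (E (false, x))) ≤
      2 * ∑ᶠ J, u J ^ 2 :=
    calc _ = ∑ᶠ I ∈ s, 2 * (u (fun x => I (E (true, x))) * u (fun x => I (E (false, x)))) :=
          mul_finsum_mem _ _
      _ ≤ ∑ᶠ I ∈ S, (u (fun x => I (E (true, x))) ^ 2 + u (fun x => I (E (false, x))) ^ 2) := by
          refine finsum_mem_le_finsum_mem_of_subset hs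
            (fun I _ => mul_nonneg zero_le_two (mul_nonneg (hu₀ _) (hu₀ _)))
            (fun I _ => by rw [← mul_assoc]; exact two_mul_le_add_sq _ _)
            (fun I _ => by positivity)
            (((hfin true).union (hfin false)).subset ?_)
          rw [← Set.inter_union_distrib_left]
          exact Set.inter_subset_inter_right _ (Function.support_add _ _)
      _ = 2 * ∑ᶠ J, u J ^ 2 := by
          rw [finsum_mem_add_distrib' (hfin true) (hfin false), hsum, hsum, two_mul]
  linarith

end Involution

theorem scalars_partial_sum_estimate_general {Λ : Type*} (d m : ℕ)
    (a : (Fin d → Λ) → ℂ) (ha : (Function.support a).Finite)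
    (π : Finpartition (univ : Finset (Fin (2*d*m))))
    (hπ : EpsPartition (epsd d m) π) :
    (∑ᶠ I ∈ {I : Fin (2*d*m) → Λ | KerGe π I},
        ∏ j : Fin (2*m), ‖a (fun l => I (seg d m j l))‖) ≤
      (∑ᶠ i : Fin d → Λ, ‖a i‖ ^ 2) ^ m := by
  obtain ⟨σ, hσ, hflip, hσπ⟩ := hπ.exists_involutive_flip
  have hinv (I : Fin (2*d*m) → Λ) (hI : KerGe π I) (p : Fin (2*d*m)) : I (σ p) = I p :=
    hI _ (π.part_mem.2 (mem_univ p)) _ (hσπ p) _ (π.mem_part (mem_univ p))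
  have hnorm : (Function.support fun i => ‖a i‖).Finite :=
    ha.subset fun i hi h => hi (by simp [h])
  set u : (Fin m × Fin d → Λ) → ℝ := fun J => ∏ k, ‖a (fun l => J (k, l))‖
  have hu : (Function.support u).Finite :=
    (finite_support_prod_comp (ι := Fin m) hnorm).preimage
      (Equiv.curry (Fin m) (Fin d) Λ).injective.injOn
  calc _ = ∑ᶠ I ∈ {I | KerGe π I},
        u (fun x => I (halfEquiv d m (true, x))) * u (fun x => I (halfEquiv d m (false, x))) :=
        finsum_mem_congr rfl fun I _ => by
          simp only [prod_eq_prod_even_mul_prod_odd, halfEquiv_apply, u]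
    _ ≤ ∑ᶠ J, u J ^ 2 :=
        finsum_mem_mul_le_finsum_sq _ (epsd_halfEquiv d m) hσ hflip _
          (fun _ => prod_nonneg fun _ _ => norm_nonneg _) hu hinv
    _ = ∑ᶠ J : Fin m → Fin d → Λ, ∏ k, ‖a (J k)‖ ^ 2 := by
        simp only [u, ← prod_pow]
        exact finsum_comp_equiv (Equiv.curry (Fin m) (Fin d) Λ)
          (f := fun J => ∏ k, ‖a (J k)‖ ^ 2)
    _ = (∑ᶠ i, ‖a i‖ ^ 2) ^ m :=
        (finsum_pow (f := fun i => ‖a i‖ ^ 2) (by simpa using hnorm) m).symm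

/-- Lemma 3.7 of the paper: for a finitely supported family
`a` of complex numbers and an `ε_d`-partition `π` of `[2dm]`,
`Σ_{ker I ≥ π} |a(i₁)|⋯|a(i_{2m})| ≤ (Σ_i |a(i)|²)^m`. -/
theorem scalars_partial_sum_estimate {Λ : Type*} (d m : ℕ) (hd : 1 ≤ d) (hm : 1 ≤ m)
    (a : (Fin d → Λ) → ℂ) (ha : (Function.support a).Finite)
    (π : Finpartition (univ : Finset (Fin (2*d*m))))
    (hπ : EpsPartition (epsd d m) π) :
    (∑ᶠ I ∈ {I : Fin (2*d*m) → Λ | KerGe π I},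
        ∏ j : Fin (2*m), ‖a (fun l => I (seg d m j l))‖) ≤
      (∑ᶠ i : Fin d → Λ, ‖a i‖ ^ 2) ^ m :=
  scalars_partial_sum_estimate_general d m a ha π hπ
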